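/- Let R be a commutative ring and D an additive R-linear category with weak kernels and weak cokernels. If a contravariant functor M : D → Mod-R is weak left exact and finitely presented, then M is isomorphic to a direct summand of a representable functor D(-,D). -/

import Mathlib

/-!
Statement 3.
Let `R` be a commutative ring and `D` an additive `R`-linear category with weak kernels and
weak cokernels.  If a contravariant functor `M : D → Mod-R` is weak left exact and finitely
presented, then `M` is isomorphic to a direct summand of a representable functor `D(-,D₀)`.
-/

open CategoryTheory Opposite

universe w v u

namespace Paper

variable (R : Type w) [CommRing R] (D : Type u) [Category.{v} D] [Preadditive D]
  [CategoryTheory.Linear R D]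

instance oppositeHomModule (X Y : Dᵒᵖ) : Module R (X ⟶ Y) where
  smul r f := (r • f.unop).op
  one_smul f := Quiver.Hom.unop_inj (one_smul _ _)
  mul_smul r s f := Quiver.Hom.unop_inj (mul_smul _ _ _)
  smul_zero r := Quiver.Hom.unop_inj (smul_zero _)
  smul_add r f g := Quiver.Hom.unop_inj (smul_add _ _ _)
  add_smul r s f := Quiver.Hom.unop_inj (add_smul _ _ _)
  zero_smul f := Quiver.Hom.unop_inj (zero_smul _ _)

instance oppositeLinear : CategoryTheory.Linear R Dᵒᵖ where
  smul_comp X Y Z r f g := by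
    exact Quiver.Hom.unop_inj (CategoryTheory.Linear.comp_smul _ _ _ g.unop r f.unop)
  comp_smul X Y Z f r g := by
    exact Quiver.Hom.unop_inj (CategoryTheory.Linear.smul_comp _ _ _ r g.unop f.unop)

variable {D}

/-- `X → Y → Z` is a weak kernel sequence, i.e. `D(-,X) → D(-,Y) → D(-,Z)` is exact. -/
def IsWeakKernelSeq {X Y Z : D} (f : X ⟶ Y) (g : Y ⟶ Z) : Prop :=
  ∀ (W : D) (w : W ⟶ Y), w ≫ g = 0 ↔ ∃ t : W ⟶ X, t ≫ f = w

/-- `X → Y → Z` is a weak cokernel sequence, i.e. `D(Z,W) → D(Y,W) → D(X,W)` is exact for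
every `W`. -/
def IsWeakCokernelSeq {X Y Z : D} (f : X ⟶ Y) (g : Y ⟶ Z) : Prop :=
  ∀ (W : D) (w : Y ⟶ W), f ≫ w = 0 ↔ ∃ t : Z ⟶ W, g ≫ t = w

/-- `D` has weak kernels. -/
def HasWeakKernels : Prop :=
  ∀ ⦃Y Z : D⦄ (g : Y ⟶ Z), ∃ (X : D) (f : X ⟶ Y), IsWeakKernelSeq f g

/-- `D` has weak cokernels. -/
def HasWeakCokernels : Prop :=
  ∀ ⦃X Y : D⦄ (f : X ⟶ Y), ∃ (Z : D) (g : Y ⟶ Z), IsWeakCokernelSeq f g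

/-- A contravariant functor `M : D → Mod-R` is weak left exact if it sends every weak
cokernel sequence `X → Y → Z` to an exact sequence `M(Z) → M(Y) → M(X)`. -/
def IsWeakLeftExact (M : Dᵒᵖ ⥤ ModuleCat.{v} R) : Prop :=
  ∀ ⦃X Y Z : D⦄ (f : X ⟶ Y) (g : Y ⟶ Z), IsWeakCokernelSeq f g →
    Function.Exact (M.map g.op) (M.map f.op)

/-- A `D`-module `M` is finitely presented if there is an exact sequence of functors
`D(-,C₀) → D(-,D₀) → M → 0`. -/
def IsFinitelyPresented (M : Dᵒᵖ ⥤ ModuleCat.{v} R) : Prop :=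
  ∃ (C₀ D₀ : D) (f : C₀ ⟶ D₀) (α : (linearYoneda R D).obj D₀ ⟶ M),
    (∀ X : Dᵒᵖ, Function.Surjective (α.app X)) ∧
    (∀ X : Dᵒᵖ, Function.Exact (((linearYoneda R D).map f).app X) (α.app X))

/-- `M` is isomorphic to a direct summand of a representable functor. -/
def IsSummandOfRepresentable (M : Dᵒᵖ ⥤ ModuleCat.{v} R) : Prop :=
  ∃ (D₀ : D) (s : M ⟶ (linearYoneda R D).obj D₀) (r : (linearYoneda R D).obj D₀ ⟶ M),
    s ≫ r = 𝟙 M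

/-!
Let `α : D(-,D₀) → M` be a presentation whose kernel is the image of `D(-,f)` for
`f : C₀ ⟶ D₀`, and let `g : D₀ ⟶ Z` be a weak cokernel of `f`. The universal element
`α 𝟙 ∈ M(D₀)` is killed by `M(f)`, so weak left exactness writes it as `M(g) (α h)` for some
`h : Z ⟶ D₀`; by Yoneda this says `D(-, g ≫ h) ≫ α = α`. As `f ≫ g = 0`, the map
`D(-, g ≫ h)` kills `ker α` and hence factors as `α ≫ s`; then `α ≫ s ≫ α = α`, and `α` is
epi, so `s ≫ α = 𝟙`.
-/

lemma _root_.CategoryTheory.NatTrans.exists_comp_eq_of_exact {S C : Type*} [Ring S] [Category C]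
    {F G H K : C ⥤ ModuleCat.{v} S} (u : F ⟶ G) (α : G ⟶ H)
    (hα : ∀ X, Function.Surjective (α.app X)) (hexact : ∀ X, Function.Exact (u.app X) (α.app X))
    (β : G ⟶ K) (hβ : u ≫ β = 0) : ∃ s : H ⟶ K, α ≫ s = β := by
  have hS : ∀ X, (ShortComplex.mk (u.app X) (α.app X)
      (by ext; exact (hexact X).apply_apply_eq_zero _)).Exact :=
    fun X => (ShortComplex.ShortExact.moduleCat_exact_iff_function_exact _).2 (hexact X)
  have _ : ∀ X, Epi (α.app X) := fun X => (ModuleCat.epi_iff_surjective _).2 (hα X)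
  let s : ∀ X, H.obj X ⟶ K.obj X := fun X =>
    (hS X).desc (β.app X) (by simpa using congr_app hβ X)
  have hs : ∀ X, α.app X ≫ s X = β.app X := fun X => (hS X).g_desc _ _
  refine ⟨⟨s, fun X Y ψ => ?_⟩, NatTrans.ext (funext hs)⟩
  rw [← cancel_epi (α.app X), ← NatTrans.naturality_assoc, hs, reassoc_of% hs, β.naturality]

lemma IsWeakCokernelSeq.comp_eq_zero {X Y Z : D} {f : X ⟶ Y} {g : Y ⟶ Z}
    (hg : IsWeakCokernelSeq f g) : f ≫ g = 0 :=
  (hg Z g).2 ⟨𝟙 Z, Category.comp_id g⟩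

variable {R}

lemma linearYoneda_natTrans_app_comp {M : Dᵒᵖ ⥤ ModuleCat.{v} R} {D₀ : D}
    (α : (linearYoneda R D).obj D₀ ⟶ M) {X Y : D} (ψ : X ⟶ Y) (φ : Y ⟶ D₀) :
    α.app (op X) (ψ ≫ φ) = M.map ψ.op (α.app (op Y) φ) :=
  NatTrans.naturality_apply α ψ.op φ

lemma IsWeakLeftExact.exists_linearYoneda_map_comp_eq {M : Dᵒᵖ ⥤ ModuleCat.{v} R}
    (hwle : IsWeakLeftExact R M) {C₀ D₀ Z : D} {f : C₀ ⟶ D₀} {g : D₀ ⟶ Z}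
    (hg : IsWeakCokernelSeq f g) (α : (linearYoneda R D).obj D₀ ⟶ M)
    (hα : Function.Surjective (α.app (op Z))) (hf : α.app (op C₀) f = 0) :
    ∃ h : Z ⟶ D₀, (linearYoneda R D).map (g ≫ h) ≫ α = α := by
  have hm₀ : M.map f.op (α.app (op D₀) (𝟙 D₀)) = 0 := by
    rw [← linearYoneda_natTrans_app_comp, Category.comp_id, hf]
  obtain ⟨n, hn⟩ := (hwle f g hg _).1 hm₀
  obtain ⟨(h : Z ⟶ D₀), rfl⟩ := hα n
  refine ⟨h, ?_⟩
  ext ⟨X⟩ (φ : X ⟶ D₀)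
  change α.app (op X) (φ ≫ g ≫ h) = α.app (op X) φ
  rw [← Category.assoc, linearYoneda_natTrans_app_comp, op_comp, M.map_comp, ModuleCat.comp_apply,
    hn, ← linearYoneda_natTrans_app_comp, Category.comp_id]

theorem summand_of_representable_of_wle_fp_general
    (hwc : HasWeakCokernels (D := D))
    (M : Dᵒᵖ ⥤ ModuleCat.{v} R)
    (hwle : IsWeakLeftExact R M) (hfp : IsFinitelyPresented R M) :
    IsSummandOfRepresentable R M := by
  obtain ⟨C₀, D₀, f, α, hsurj, hexact⟩ := hfp
  obtain ⟨Z, g, hg⟩ := hwc f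
  have hαf : α.app (op C₀) f = 0 := (hexact (op C₀) f).2 ⟨𝟙 C₀, Category.id_comp f⟩
  obtain ⟨h, hh⟩ := hwle.exists_linearYoneda_map_comp_eq hg α (hsurj (op Z)) hαf
  have hfgh : (linearYoneda R D).map f ≫ (linearYoneda R D).map (g ≫ h) = 0 := by
    rw [← Functor.map_comp, reassoc_of% hg.comp_eq_zero, Limits.zero_comp]
    ext
    simp
  obtain ⟨s, hs⟩ := NatTrans.exists_comp_eq_of_exact _ α hsurj hexact _ hfgh
  have _ : ∀ X, Epi (α.app X) := fun X => (ModuleCat.epi_iff_surjective _).2 (hsurj X)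
  have _ : Epi α := NatTrans.epi_of_epi_app α
  refine ⟨D₀, s, α, ?_⟩
  rw [← cancel_epi α, reassoc_of% hs, hh, Category.comp_id]

theorem summand_of_representable_of_wle_fp
    (hwk : HasWeakKernels (D := D)) (hwc : HasWeakCokernels (D := D))
    (M : Dᵒᵖ ⥤ ModuleCat.{v} R) [M.Additive] [M.Linear R]
    (hwle : IsWeakLeftExact R M) (hfp : IsFinitelyPresented R M) :
    IsSummandOfRepresentable R M :=
  summand_of_representable_of_wle_fp_general hwc M hwle hfp

end Paper
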